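/- Let ω be a finite permutation. Then there exists a unique reduced expression η = η₁η₂...η_l representing ω such that η is a concatenation of blocks λ₁, λ₂, ..., λ_s where (1) each block λ_i is a strictly increasing sequence of consecutive integers, and (2) the sequence of initial terms of the blocks λ₁, ..., λ_s is strictly decreasing. -/

import Mathlib

abbrev Cell : Type := ℕ × ℕ

/-- A tower diagram: a finite set of cells `(i, j)` with `i ≥ 1` that is downward
closed in each column. -/
def IsTowerDiagram (T : Finset Cell) : Prop :=
  ∀ c ∈ T, 1 ≤ c.1 ∧ ∀ j' ≤ c.2, (c.1, j') ∈ T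

/-- The flight path of a cell of `T` (F1: direct flight, F2: zigzag flight). -/
inductive FlightPath (T : Finset Cell) : Cell → Finset Cell → Prop
  | direct (i j : ℕ) (hmem : (i, j) ∈ T)
      (hnone : ∀ c ∈ T, ¬(c.1 < i ∧ c.1 + c.2 + 1 = i + j)) :
      FlightPath T (i, j) {(i, j)}
  | zigzag (i j i' j' : ℕ) (P : Finset Cell)
      (hmem : (i, j) ∈ T) (hmem' : (i', j') ∈ T)
      (hleft : i' < i) (hdiag : i' + j' + 1 = i + j)
      (hclosest : ∀ c ∈ T, c.1 < i → c.1 + c.2 + 1 = i + j → c.1 ≤ i')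
      (hup : (i', j' + 1) ∈ T)
      (hrec : FlightPath T (i', j') P) :
      FlightPath T (i, j) (insert (i, j) (insert (i', j' + 1) P))

/-- `FlightNumber T c f`: `c` has a flight path in `T` whose lexicographically
least cell has coordinate sum `f`. -/
def FlightNumber (T : Finset Cell) (c : Cell) (f : ℕ) : Prop :=
  ∃ P : Finset Cell, FlightPath T c P ∧
    ∃ m ∈ P, m.1 + m.2 = f ∧ ∀ p ∈ P, m.1 < p.1 ∨ (m.1 = p.1 ∧ m.2 ≤ p.2)

/-- A corner cell: it has a flight path and no cell on top of it. -/
def IsCornerCell (T : Finset Cell) (c : Cell) : Prop :=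
  c ∈ T ∧ (c.1, c.2 + 1) ∉ T ∧ ∃ P, FlightPath T c P

/-- `SlideAux T lo α T'` : sliding `α` into the subdiagram of `T` consisting of
the towers in columns `≥ lo` does not terminate and produces `T'`. -/
inductive SlideAux (T : Finset Cell) : ℕ → ℕ → Finset Cell → Prop
  | s1a (lo α : ℕ)
      (h1 : ∀ c ∈ T, lo ≤ c.1 → c.1 + c.2 + 1 ≠ α)
      (h2 : ∀ c ∈ T, lo ≤ c.1 → c.1 + c.2 ≠ α) :
      SlideAux T lo α (insert (α, 0) T)
  | s1c (lo α : ℕ) (T' : Finset Cell)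
      (h1 : ∀ c ∈ T, lo ≤ c.1 → c.1 + c.2 + 1 ≠ α)
      (h2 : (α, 0) ∈ T) (h2' : lo ≤ α) (h3 : (α, 1) ∈ T)
      (hrec : SlideAux T (α + 1) (α + 1) T') :
      SlideAux T lo α T'
  | s2a (lo α i j : ℕ)
      (hmem : (i, j) ∈ T) (hlo : lo ≤ i) (hdiag : i + j + 1 = α)
      (hmin : ∀ c ∈ T, lo ≤ c.1 → c.1 + c.2 + 1 = α → i ≤ c.1)
      (htop : (i, j + 1) ∉ T) :
      SlideAux T lo α (insert (i, j + 1) T)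
  | s2c (lo α i j : ℕ) (T' : Finset Cell)
      (hmem : (i, j) ∈ T) (hlo : lo ≤ i) (hdiag : i + j + 1 = α)
      (hmin : ∀ c ∈ T, lo ≤ c.1 → c.1 + c.2 + 1 = α → i ≤ c.1)
      (h1 : (i, j + 1) ∈ T) (h2 : (i, j + 2) ∈ T)
      (hrec : SlideAux T (i + 1) (α + 1) T') :
      SlideAux T lo α T'

/-- The slide `α ↘ T` does not terminate and produces `T'`. -/
def Slides (T : Finset Cell) (α : ℕ) (T' : Finset Cell) : Prop :=
  SlideAux T 0 α T'

/-- Successive sliding of the letters of a word into the empty diagram. -/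
inductive SRDiagram : List ℕ → Finset Cell → Prop
  | nil : SRDiagram [] ∅
  | snoc {w : List ℕ} {T T' : Finset Cell} {a : ℕ}
      (hw : SRDiagram w T) (ha : Slides T a T') :
      SRDiagram (w ++ [a]) T'

/-- The shape (underlying diagram) of a labelled tableau. -/
def shapeOf (R : Finset (Cell × ℕ)) : Finset Cell := R.image Prod.fst

/-- The recording tableau of the SR algorithm: the cell created at step `k` is
labelled `k`. -/
inductive SRRecord : List ℕ → Finset (Cell × ℕ) → Prop
  | nil : SRRecord [] ∅
  | snoc {w : List ℕ} {R : Finset (Cell × ℕ)} {a : ℕ} {c : Cell}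
      (hw : SRRecord w R) (hc : c ∉ shapeOf R)
      (ha : Slides (shapeOf R) a (insert c (shapeOf R))) :
      SRRecord (w ++ [a]) (insert (c, w.length + 1) R)

/-- The sliding tableau of the SR algorithm: each new cell `(i, j)` is labelled
`i + j`. -/
inductive SRSliding : List ℕ → Finset (Cell × ℕ) → Prop
  | nil : SRSliding [] ∅
  | snoc {w : List ℕ} {S : Finset (Cell × ℕ)} {a : ℕ} {c : Cell}
      (hw : SRSliding w S) (hc : c ∉ shapeOf S)
      (ha : Slides (shapeOf S) a (insert c (shapeOf S))) :
      SRSliding (w ++ [a]) (insert (c, c.1 + c.2) S)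

/-- A tower tableau: a bijective labelling of a tower diagram by `{1, …, n}`. -/
def IsTowerTableau (R : Finset (Cell × ℕ)) : Prop :=
  IsTowerDiagram (shapeOf R) ∧
  (∀ p ∈ R, ∀ q ∈ R, p.1 = q.1 → p = q) ∧
  R.image Prod.snd = Finset.Icc 1 R.card

/-- The subtableau of cells with labels `≤ a`. -/
def labelLE (R : Finset (Cell × ℕ)) (a : ℕ) : Finset (Cell × ℕ) :=
  R.filter fun p => p.2 ≤ a

/-- A standard tower tableau. -/
def IsStandardTowerTableau (R : Finset (Cell × ℕ)) : Prop :=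
  IsTowerTableau R ∧
  ∀ p ∈ R, IsTowerDiagram (shapeOf (labelLE R p.2)) ∧
    IsCornerCell (shapeOf (labelLE R p.2)) p.1

/-- `ReadsTo R w` : `w` is the reading word of the tableau `R`: the `k`-th letter
is the flight number, in `shape (R_{≤ k})`, of the cell labelled `k`. -/
def ReadsTo (R : Finset (Cell × ℕ)) (w : List ℕ) : Prop :=
  w.length = R.card ∧
  ∀ k : Fin w.length, ∀ c : Cell, (c, (k : ℕ) + 1) ∈ R →
    FlightNumber (shapeOf (labelLE R ((k : ℕ) + 1))) c (w.get k)

/-- A word of positive integers. -/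
def IsPosWord (w : List ℕ) : Prop := ∀ a ∈ w, 1 ≤ a

/-- The permutation represented by a word: the product of the corresponding
adjacent transpositions `sᵢ = (i, i+1)`. -/
def permOf (w : List ℕ) : Equiv.Perm ℕ :=
  (w.map fun i => Equiv.swap i (i + 1)).prod

/-- A reduced word: of minimal length among the positive words representing the
same permutation. -/
def IsReducedWord (w : List ℕ) : Prop :=
  IsPosWord w ∧
    ∀ w' : List ℕ, IsPosWord w' → permOf w' = permOf w → w.length ≤ w'.length

/-- A finite permutation: an element of the direct limit `⋃ₙ Sₙ`. -/
def FinitePerm (ω : Equiv.Perm ℕ) : Prop := ∃ w, IsPosWord w ∧ permOf w = ω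

/-- The Coxeter length of a finite permutation. -/
noncomputable def coxLength (ω : Equiv.Perm ℕ) : ℕ :=
  sInf {n | ∃ w : List ℕ, IsPosWord w ∧ permOf w = ω ∧ w.length = n}

/-- The Rothe diagram of a permutation (pairs written `(row, column)`). -/
def RotheDiagram (ω : Equiv.Perm ℕ) : Set (ℕ × ℕ) :=
  {p | 1 ≤ p.1 ∧ 1 ≤ p.2 ∧ p.2 < ω p.1 ∧ p.1 < ω.symm p.2}

/-- Interchanging rows `i` and `i + 1` of a diagram. -/
def rowSwap (i : ℕ) (D : Set (ℕ × ℕ)) : Set (ℕ × ℕ) :=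
  {p | (Equiv.swap i (i + 1) p.1, p.2) ∈ D}

/-- The natural labelling of a tower diagram: labels `1, …, n` go bottom to top
within each tower, taking the towers from right to left. -/
def naturalTableau (T : Finset Cell) : Finset (Cell × ℕ) :=
  T.image fun c => (c, (T.filter fun d => c.1 < d.1).card + c.2 + 1)

/-- A word in natural form: a concatenation of blocks, each a strictly
increasing run of consecutive integers, whose initial terms strictly decrease. -/
def IsNaturalForm (η : List ℕ) : Prop :=
  ∃ blocks : List (List ℕ),
    η = blocks.flatten ∧
    (∀ b ∈ blocks, ∃ s len : ℕ, 1 ≤ len ∧ b = List.range' s len) ∧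
    List.Chain' (· > ·) (blocks.map fun b => b.headI)

/-!
Every adjacent transposition changes the number of inversions by at most one, so the inversion
number of `ω` bounds the length of every word for `ω` from below. For a natural word, the last
block `s_r s_{r+1} ⋯ s_{r+k-1}` is determined by the permutation `ω` it represents: all earlier
letters exceed `r`, so `r` is the least point moved by `ω` and `r + k = ω⁻¹ r`. Removing this
block removes at least `k` inversions, which gives existence by strong induction on the inversion
number and uniqueness by induction on the word; along the way, the length of a natural word is at
most the inversion number of its permutation, so natural words are reduced.
-/

lemma permOf_cons (a : ℕ) (w : List ℕ) :
    permOf (a :: w) = Equiv.swap a (a + 1) * permOf w := rfl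

lemma permOf_singleton (a : ℕ) : permOf [a] = Equiv.swap a (a + 1) := mul_one _

lemma permOf_append (u v : List ℕ) : permOf (u ++ v) = permOf u * permOf v := by
  simp [permOf]

lemma permOf_reverse (w : List ℕ) : permOf w.reverse = (permOf w)⁻¹ := by
  simp [permOf, List.prod_inv_reverse, Function.comp_def]

lemma permOf_apply_of_forall_lt {w : List ℕ} {m x : ℕ} (hw : ∀ a ∈ w, m < a) (hx : x ≤ m) :
    permOf w x = x := by
  induction w with
  | nil => rfl
  | cons a w ih =>
    have ha := hw a List.mem_cons_self
    rw [permOf_cons, Equiv.Perm.mul_apply, ih fun b hb => hw b (List.mem_cons_of_mem a hb),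
      Equiv.swap_apply_of_ne_of_ne (by omega) (by omega)]

lemma permOf_range'_apply (r k x : ℕ) :
    permOf (List.range' r k) x =
      if x < r then x else if x < r + k then x + 1 else if x = r + k then r else x := by
  induction k generalizing x with
  | zero =>
    simp only [List.range'_zero, permOf, List.map_nil, List.prod_nil, Equiv.Perm.one_apply]
    split_ifs <;> omega
  | succ k ih =>
    rw [List.range'_1_concat, permOf_append, permOf_singleton, Equiv.Perm.mul_apply, ih,
      Equiv.swap_apply_def]
    split_ifs <;> omega

def inversions (σ : Equiv.Perm ℕ) : Set (ℕ × ℕ) := {p | p.1 < p.2 ∧ σ p.2 < σ p.1}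

-- `ncard` is `0` on infinite sets, hence the finiteness hypotheses below.
noncomputable def invCount (σ : Equiv.Perm ℕ) : ℕ := (inversions σ).ncard

lemma inversions_one : inversions 1 = ∅ := by
  ext p
  simp only [inversions, Equiv.Perm.one_apply, Set.mem_ofPred_eq, Set.mem_empty_iff_false,
    iff_false, not_and, not_lt]
  exact le_of_lt

lemma inversions_one_finite : (inversions 1).Finite := inversions_one ▸ Set.finite_empty

lemma invCount_one : invCount 1 = 0 := by rw [invCount, inversions_one, Set.ncard_empty]

section AdjacentSwap

variable {σ : Equiv.Perm ℕ} {a : ℕ}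

local notation "s" => Equiv.swap a (a + 1)

lemma swap_lt_swap_iff {x y : ℕ} (h₁ : (x, y) ≠ (a, a + 1)) (h₂ : (x, y) ≠ (a + 1, a)) :
    s x < s y ↔ x < y := by
  simp only [ne_eq, Prod.mk.injEq, not_and] at h₁ h₂
  rw [Equiv.swap_apply_def, Equiv.swap_apply_def]
  split_ifs <;> omega

lemma prodMap_swap_involutive : Function.Involutive (Prod.map s s) :=
  fun _ => Prod.ext (Equiv.swap_apply_self _ _ _) (Equiv.swap_apply_self _ _ _)

lemma mem_inversions_mul_swap {p : ℕ × ℕ} (h₁ : p ≠ (a, a + 1)) (h₂ : p ≠ (a + 1, a)) :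
    p ∈ inversions (σ * s) ↔ Prod.map s s p ∈ inversions σ := by
  simp only [inversions, Set.mem_ofPred_eq, Prod.map_fst, Prod.map_snd, Equiv.Perm.mul_apply,
    swap_lt_swap_iff h₁ h₂]

lemma inversions_mul_swap_subset :
    inversions (σ * s) ⊆ insert (a, a + 1) (Prod.map s s '' inversions σ) := by
  intro p hp
  by_cases h₁ : p = (a, a + 1)
  · exact Or.inl h₁
  have h₂ : p ≠ (a + 1, a) := by rintro rfl; exact absurd hp.1 (by omega)
  exact Or.inr ⟨Prod.map s s p, (mem_inversions_mul_swap h₁ h₂).1 hp, prodMap_swap_involutive p⟩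

lemma insert_image_subset_inversions_mul_swap (h : σ a < σ (a + 1)) :
    insert (a, a + 1) (Prod.map s s '' inversions σ) ⊆ inversions (σ * s) := by
  rintro _ (rfl | ⟨q, hq, rfl⟩)
  · simpa [inversions] using h
  have hq₁ : q ≠ (a, a + 1) := by rintro rfl; exact lt_asymm h hq.2
  have hq₂ : q ≠ (a + 1, a) := by rintro rfl; exact lt_asymm (Nat.lt_succ_self a) hq.1
  rw [mem_inversions_mul_swap, prodMap_swap_involutive q]
  · exact hq
  · rwa [ne_eq, prodMap_swap_involutive.eq_iff, Prod.map, Equiv.swap_apply_left,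
      Equiv.swap_apply_right]
  · rwa [ne_eq, prodMap_swap_involutive.eq_iff, Prod.map, Equiv.swap_apply_left,
      Equiv.swap_apply_right]

lemma inversions_mul_swap_finite (hσ : (inversions σ).Finite) :
    (inversions (σ * s)).Finite :=
  ((hσ.image _).insert _).subset inversions_mul_swap_subset

lemma invCount_mul_swap_le (hσ : (inversions σ).Finite) :
    invCount (σ * s) ≤ invCount σ + 1 :=
  calc invCount (σ * s) ≤ (insert (a, a + 1) (Prod.map s s '' inversions σ)).ncard :=
        Set.ncard_le_ncard inversions_mul_swap_subset ((hσ.image _).insert _)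
    _ ≤ (Prod.map s s '' inversions σ).ncard + 1 := Set.ncard_insert_le _ _
    _ ≤ invCount σ + 1 := Nat.add_le_add_right (Set.ncard_image_le hσ) 1

lemma invCount_add_one_le_mul_swap (hσ : (inversions σ).Finite) (h : σ a < σ (a + 1)) :
    invCount σ + 1 ≤ invCount (σ * s) := by
  have hnot : (a, a + 1) ∉ Prod.map s s '' inversions σ := by
    rintro ⟨q, hq, hq'⟩
    rw [prodMap_swap_involutive.eq_iff, Prod.map, Equiv.swap_apply_left,
      Equiv.swap_apply_right] at hq'
    subst hq'
    exact lt_asymm (Nat.lt_succ_self a) hq.1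
  calc invCount σ + 1 = (insert (a, a + 1) (Prod.map s s '' inversions σ)).ncard := by
        rw [Set.ncard_insert_of_notMem hnot (hσ.image _),
          Set.ncard_image_of_injective _ prodMap_swap_involutive.injective]; rfl
    _ ≤ invCount (σ * s) :=
        Set.ncard_le_ncard (insert_image_subset_inversions_mul_swap h)
          (inversions_mul_swap_finite hσ)

end AdjacentSwap

lemma inversions_mul_permOf_finite {σ : Equiv.Perm ℕ} (hσ : (inversions σ).Finite)
    (w : List ℕ) : (inversions (σ * permOf w)).Finite := by
  induction w generalizing σ with
  | nil => simpa [permOf] using hσ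
  | cons a w ih => rw [permOf_cons, ← mul_assoc]; exact ih (inversions_mul_swap_finite hσ)

lemma invCount_mul_permOf_le {σ : Equiv.Perm ℕ} (hσ : (inversions σ).Finite) (w : List ℕ) :
    invCount (σ * permOf w) ≤ invCount σ + w.length := by
  induction w generalizing σ with
  | nil => simp [permOf]
  | cons a w ih =>
    rw [permOf_cons, ← mul_assoc, List.length_cons]
    have := invCount_mul_swap_le (a := a) hσ
    have := ih (inversions_mul_swap_finite (a := a) hσ)
    omega

lemma inversions_permOf_finite (w : List ℕ) : (inversions (permOf w)).Finite := by
  simpa only [one_mul] using inversions_mul_permOf_finite inversions_one_finite w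

lemma invCount_permOf_le_length (w : List ℕ) : invCount (permOf w) ≤ w.length := by
  simpa only [one_mul, invCount_one, zero_add] using
    invCount_mul_permOf_le inversions_one_finite w

section Block

variable {σ : Equiv.Perm ℕ} {r k : ℕ}

lemma lt_apply_of_forall_le_apply_eq (hσ : ∀ x ≤ r, σ x = x) {y : ℕ} (hy : r < y) :
    r < σ y := by
  by_contra! h
  have := σ.injective (hσ _ h)
  omega

lemma mul_permOf_range'_apply_of_lt (hσ : ∀ x ≤ r, σ x = x) {x : ℕ} (hx : x < r) :
    (σ * permOf (List.range' r k)) x = x := by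
  rw [Equiv.Perm.mul_apply, permOf_range'_apply, if_pos hx, hσ x hx.le]

lemma mul_permOf_range'_apply_add (hσ : ∀ x ≤ r, σ x = x) :
    (σ * permOf (List.range' r k)) (r + k) = r := by
  rw [Equiv.Perm.mul_apply, permOf_range'_apply]
  simp [hσ r le_rfl]

lemma mul_permOf_range'_apply_self_ne (hσ : ∀ x ≤ r, σ x = x) (hk : 0 < k) :
    (σ * permOf (List.range' r k)) r ≠ r := by
  rw [Equiv.Perm.mul_apply, permOf_range'_apply, if_neg (lt_irrefl r), if_pos (by omega)]
  exact (lt_apply_of_forall_le_apply_eq hσ (Nat.lt_succ_self r)).ne'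

lemma invCount_add_le_mul_permOf_range' (hσ : ∀ x ≤ r, σ x = x)
    (hfin : (inversions σ).Finite) :
    invCount σ + k ≤ invCount (σ * permOf (List.range' r k)) := by
  induction k with
  | zero => simp [permOf]
  | succ k ih =>
    have hτ : (σ * permOf (List.range' r k)) (r + k) <
        (σ * permOf (List.range' r k)) (r + k + 1) := by
      rw [mul_permOf_range'_apply_add hσ, Equiv.Perm.mul_apply, permOf_range'_apply,
        if_neg (by omega), if_neg (by omega), if_neg (by omega)]
      exact lt_apply_of_forall_le_apply_eq hσ (by omega)
    rw [List.range'_1_concat, permOf_append, permOf_singleton, ← mul_assoc]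
    have := invCount_add_one_le_mul_swap (inversions_mul_permOf_finite hfin _) hτ
    omega

end Block

lemma headI_range' (s : ℕ) {n : ℕ} (hn : 0 < n) : (List.range' s n).headI = s := by
  obtain ⟨n, rfl⟩ := Nat.exists_eq_add_of_lt hn
  rfl

-- Natural words grown by their last block: the block `range' r k` has the smallest initial term
-- exactly when `r` is below every earlier letter.
inductive NaturalWord : List ℕ → Prop
  | nil : NaturalWord []
  | append_range' {η : List ℕ} {r k : ℕ} (hη : NaturalWord η) (hk : 0 < k)
      (hr : ∀ a ∈ η, r < a) : NaturalWord (η ++ List.range' r k)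

lemma naturalWord_flatten {L : List (List ℕ)}
    (hL : ∀ b ∈ L, ∃ s len : ℕ, 1 ≤ len ∧ b = List.range' s len)
    (hch : List.IsChain (· > ·) (L.map List.headI)) : NaturalWord L.flatten := by
  induction L using List.reverseRecOn with
  | nil => exact .nil
  | append_singleton L b ih =>
    obtain ⟨r, k, hk, rfl⟩ := hL b (by simp)
    rw [List.map_append] at hch
    rw [List.flatten_append, List.flatten_singleton]
    refine (ih (fun c hc => hL c (by simp [hc])) hch.left_of_append).append_range' hk ?_
    intro a ha
    obtain ⟨c, hc, hac⟩ := List.mem_flatten.1 ha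
    obtain ⟨s, len, hlen, rfl⟩ := hL c (by simp [hc])
    have hrs := List.pairwise_append.1 (List.isChain_iff_pairwise.1 hch) |>.2.2 _
      (List.mem_map_of_mem hc) _ (List.mem_singleton_self _)
    rw [headI_range' s hlen, headI_range' r hk] at hrs
    exact hrs.trans_le (List.mem_range'_1.1 hac).1

lemma NaturalWord.isNaturalForm {η : List ℕ} (h : NaturalWord η) : IsNaturalForm η := by
  induction h with
  | nil => exact ⟨[], rfl, by simp, List.IsChain.nil⟩
  | @append_range' η r k _ hk hr ih =>
    obtain ⟨L, rfl, hL, hch⟩ := ih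
    refine ⟨L ++ [List.range' r k], by simp, ?_, ?_⟩
    · simp only [List.mem_append, List.mem_singleton]
      rintro b (hb | rfl)
      exacts [hL b hb, ⟨r, k, hk, rfl⟩]
    · rw [List.map_append]
      refine hch.append (List.isChain_singleton _) fun x hx y hy => ?_
      obtain ⟨c, hc, rfl⟩ := List.mem_map.1 (List.mem_of_mem_getLast? hx)
      obtain ⟨s, len, hlen, rfl⟩ := hL c hc
      simp only [List.map_cons, List.map_nil, List.head?_cons, Option.mem_def,
        Option.some.injEq, headI_range' r hk] at hy
      rw [headI_range' s hlen, ← hy]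
      exact hr s (List.mem_flatten.2 ⟨_, hc, List.mem_range'_1.2 ⟨le_rfl, by omega⟩⟩)

lemma isNaturalForm_iff_naturalWord {η : List ℕ} : IsNaturalForm η ↔ NaturalWord η := by
  refine ⟨?_, NaturalWord.isNaturalForm⟩
  rintro ⟨L, rfl, hL, hch⟩
  exact naturalWord_flatten hL hch

lemma permOf_append_range'_ne_one {η : List ℕ} {r k : ℕ} (hr : ∀ a ∈ η, r < a) (hk : 0 < k) :
    permOf (η ++ List.range' r k) ≠ 1 := fun h =>
  mul_permOf_range'_apply_self_ne (fun _ hx => permOf_apply_of_forall_lt hr hx) hk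
    (by rw [← permOf_append, h, Equiv.Perm.one_apply])

theorem NaturalWord.eq_of_permOf_eq {η η' : List ℕ} (h : NaturalWord η) (h' : NaturalWord η')
    (he : permOf η = permOf η') : η = η' := by
  induction h generalizing η' with
  | nil =>
    cases h' with
    | nil => rfl
    | append_range' _ hk' hr' => exact absurd he.symm (permOf_append_range'_ne_one hr' hk')
  | @append_range' η r k _ hk hr ih =>
    cases h' with
    | nil => exact absurd he (permOf_append_range'_ne_one hr hk)
    | @append_range' η' r' k' h₀' hk' hr' =>
      have hσ : ∀ x ≤ r, permOf η x = x := fun _ => permOf_apply_of_forall_lt hr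
      have hσ' : ∀ x ≤ r', permOf η' x = x := fun _ => permOf_apply_of_forall_lt hr'
      rw [permOf_append, permOf_append] at he
      -- the last block is read off the permutation: `r` is its least moved point and `r + k`
      -- the preimage of `r`
      obtain rfl : r = r' := le_antisymm
        (not_lt.1 fun hlt => mul_permOf_range'_apply_self_ne hσ' hk'
          (he ▸ mul_permOf_range'_apply_of_lt hσ hlt))
        (not_lt.1 fun hlt => mul_permOf_range'_apply_self_ne hσ hk
          (he.symm ▸ mul_permOf_range'_apply_of_lt hσ' hlt))
      obtain rfl : k = k' := by
        have := (permOf η' * permOf (List.range' r k')).injective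
          ((he ▸ mul_permOf_range'_apply_add hσ).trans (mul_permOf_range'_apply_add hσ').symm)
        omega
      rw [ih h₀' (mul_right_cancel he)]

lemma NaturalWord.length_le_invCount {η : List ℕ} (h : NaturalWord η) :
    η.length ≤ invCount (permOf η) := by
  induction h with
  | nil => exact Nat.zero_le _
  | @append_range' η r k _ _ hr ih =>
    rw [permOf_append, List.length_append, List.length_range']
    exact (Nat.add_le_add_right ih k).trans <| invCount_add_le_mul_permOf_range'
      (fun _ => permOf_apply_of_forall_lt hr) (inversions_permOf_finite η)

lemma exists_lowest_moved {ω : Equiv.Perm ℕ} (h : ω ≠ 1) :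
    ∃ r, (∀ x < r, ω x = x) ∧ ω r ≠ r := by
  have hex : ∃ x, ω x ≠ x := by
    by_contra! hfix
    exact h (Equiv.ext hfix)
  exact ⟨Nat.find hex, fun x hx => not_not.1 (Nat.find_min hex hx), Nat.find_spec hex⟩

lemma le_symm_apply_of_forall_lt {ω : Equiv.Perm ℕ} {r : ℕ} (hω : ∀ x < r, ω x = x) :
    r ≤ ω.symm r := not_lt.1 fun hlt => by
  have := hω _ hlt
  rw [Equiv.apply_symm_apply] at this
  omega

lemma mul_inv_permOf_range'_apply {ω : Equiv.Perm ℕ} {r x : ℕ} (hω : ∀ x < r, ω x = x)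
    (hx : x ≤ r) : (ω * (permOf (List.range' r (ω.symm r - r)))⁻¹) x = x := by
  have hr := le_symm_apply_of_forall_lt hω
  rw [Equiv.Perm.mul_apply]
  rcases hx.lt_or_eq with hx | rfl
  · have hβ : permOf (List.range' r (ω.symm r - r)) x = x := by
      rw [permOf_range'_apply, if_pos hx]
    rw [Equiv.Perm.inv_eq_iff_eq.2 hβ.symm, hω x hx]
  · have hβ : permOf (List.range' x (ω.symm x - x)) (ω.symm x) = x := by
      rw [permOf_range'_apply, if_neg hr.not_gt, Nat.add_sub_cancel' hr, if_neg (lt_irrefl _),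
        if_pos rfl]
    rw [Equiv.Perm.inv_eq_iff_eq.2 hβ.symm, Equiv.apply_symm_apply]

theorem exists_naturalWord {ω : Equiv.Perm ℕ} (hω : (inversions ω).Finite) {m : ℕ}
    (hm : ∀ x < m, ω x = x) : ∃ η, NaturalWord η ∧ permOf η = ω ∧ ∀ a ∈ η, m ≤ a := by
  induction hn : invCount ω using Nat.strong_induction_on generalizing ω m with
  | _ n ih =>
  by_cases h1 : ω = 1
  · exact ⟨[], .nil, h1.symm, by simp⟩
  obtain ⟨r, hbelow, hr⟩ := exists_lowest_moved h1
  have hmr : m ≤ r := not_lt.1 fun h => hr (hm r h)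
  have hk : 0 < ω.symm r - r := by
    have : ω.symm r ≠ r := fun h => hr (ω.symm_apply_eq.1 h).symm
    have := le_symm_apply_of_forall_lt hbelow
    omega
  -- peel off the last block `s_r s_{r+1} ⋯ s_{ω⁻¹ r - 1}`
  have hfix : ∀ x ≤ r, (ω * (permOf (List.range' r (ω.symm r - r)))⁻¹) x = x :=
    fun _ => mul_inv_permOf_range'_apply hbelow
  have hfin : (inversions (ω * (permOf (List.range' r (ω.symm r - r)))⁻¹)).Finite := by
    rw [← permOf_reverse]; exact inversions_mul_permOf_finite hω _
  have hcount := invCount_add_le_mul_permOf_range' (k := ω.symm r - r) hfix hfin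
  rw [inv_mul_cancel_right] at hcount
  obtain ⟨η, hη, hperm, hge⟩ :=
    ih _ (by omega) hfin (fun x (hx : x < r + 1) => hfix x (by omega)) rfl
  refine ⟨η ++ List.range' r (ω.symm r - r), hη.append_range' hk hge, ?_, ?_⟩
  · rw [permOf_append, hperm, inv_mul_cancel_right]
  · simp only [List.mem_append, List.mem_range'_1]
    rintro a (ha | ha)
    exacts [by have := hge a ha; omega, by omega]

/-- Every finite permutation has a unique reduced expression
in natural form: a concatenation of blocks of consecutive increasing integers
whose initial terms strictly decrease. -/
theorem natural_word_exists_unique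
    (ω : Equiv.Perm ℕ) (hω : FinitePerm ω) :
    ∃! η : List ℕ, IsReducedWord η ∧ permOf η = ω ∧ IsNaturalForm η := by
  obtain ⟨w, hw, rfl⟩ := hω
  obtain ⟨η, hη, hperm, hpos⟩ := exists_naturalWord (inversions_permOf_finite w) (m := 1)
    fun x hx => permOf_apply_of_forall_lt hw (Nat.lt_succ_iff.1 hx)
  refine ⟨η, ⟨⟨hpos, fun w' _ hw' => ?_⟩, hperm, hη.isNaturalForm⟩, ?_⟩
  · calc η.length ≤ invCount (permOf η) := hη.length_le_invCount
      _ = invCount (permOf w') := by rw [hw']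
      _ ≤ w'.length := invCount_permOf_le_length w'
  · rintro η' ⟨-, hperm', hη'⟩
    exact (isNaturalForm_iff_naturalWord.1 hη').eq_of_permOf_eq hη (hperm'.trans hperm.symm)
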